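/- arXiv:2201.12820 — 3 statements merged into one kernel-verified Lean document; each statement's English description precedes it below -/
import Mathlib

section
/- Let X be a nonempty connected topological space having only finitely many irreducible components C₁, …, C_r (r ≥ 1). Let S be the set of points of X that lie on at least two irreducible components. Assume that S is finite and that every point of S lies on exactly two of the irreducible components. Then r ≤ |S| + 1. -/
/-!
Join two irreducible components by an edge when they meet. Since the components are finitely
many closed sets covering the connected space `X`, this graph is connected, so it has at least
`r - 1` edges. Sending an edge to a point of `S` where its two components meet is injective,
because such a point lies on no third component.
-/

open Set

variable {X : Type*} (𝒞 : Set (Set X))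

def meetGraph : SimpleGraph 𝒞 where
  Adj C D := C ≠ D ∧ ((C : Set X) ∩ D).Nonempty
  symm := ⟨fun _ _ h => ⟨h.1.symm, inter_comm (α := X) _ _ ▸ h.2⟩⟩
  loopless := ⟨fun _ h => h.1 rfl⟩

variable {𝒞}

theorem meetGraph_adj {C D : 𝒞} :
    (meetGraph 𝒞).Adj C D ↔ C ≠ D ∧ ((C : Set X) ∩ D).Nonempty :=
  Iff.rfl

theorem meetGraph_preconnected [TopologicalSpace X] [PreconnectedSpace X] (h𝒞 : 𝒞.Finite)
    (hclosed : ∀ C ∈ 𝒞, IsClosed C) (hne : ∀ C ∈ 𝒞, C.Nonempty) (hcover : ⋃₀ 𝒞 = univ) :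
    (meetGraph 𝒞).Preconnected := by
  have := h𝒞.to_subtype
  intro C D
  by_contra hCD
  set R := {E : 𝒞 | (meetGraph 𝒞).Reachable C E}
  have hclosed_biUnion (T : Set 𝒞) : IsClosed (⋃ E ∈ T, (E : Set X)) :=
    T.toFinite.isClosed_biUnion fun E _ => hclosed E E.2
  have hcover_R : univ ⊆ (⋃ E ∈ R, (E : Set X)) ∪ ⋃ E ∈ Rᶜ, (E : Set X) := by
    intro x _
    obtain ⟨E, hE, hxE⟩ := mem_sUnion.mp (hcover ▸ mem_univ x)
    by_cases h : (⟨E, hE⟩ : 𝒞) ∈ R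
    · exact Or.inl (mem_biUnion h hxE)
    · exact Or.inr (mem_biUnion (mem_compl h) hxE)
  have hnonempty {T : Set 𝒞} {E : 𝒞} (hE : E ∈ T) :
      (univ ∩ ⋃ F ∈ T, (F : Set X)).Nonempty := by
    obtain ⟨x, hx⟩ := hne E E.2
    exact ⟨x, mem_univ x, mem_biUnion hE hx⟩
  obtain ⟨x, -, hxR, hxRc⟩ := isPreconnected_closed_iff.mp isPreconnected_univ _ _
    (hclosed_biUnion R) (hclosed_biUnion Rᶜ) hcover_R (hnonempty (SimpleGraph.Reachable.refl C))
    (hnonempty (show D ∈ Rᶜ from hCD))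
  obtain ⟨E, hER, hxE⟩ := mem_iUnion₂.mp hxR
  obtain ⟨F, hFR, hxF⟩ := mem_iUnion₂.mp hxRc
  have hadj : (meetGraph 𝒞).Adj E F := meetGraph_adj.mpr ⟨fun h => hFR (h ▸ hER), x, hxE, hxF⟩
  exact hFR (SimpleGraph.Reachable.trans hER hadj.reachable)

theorem sep_mem_eq_pair (h𝒞 : 𝒞.Finite) (hle : ∀ x, {C ∈ 𝒞 | x ∈ C}.ncard ≤ 2)
    {C D : 𝒞} (hCD : C ≠ D) {x : X} (hxC : x ∈ (C : Set X)) (hxD : x ∈ (D : Set X)) :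
    {E ∈ 𝒞 | x ∈ E} = {(C : Set X), (D : Set X)} := by
  refine (eq_of_subset_of_ncard_le ?_ ?_ (h𝒞.subset (sep_subset _ _))).symm
  · exact pair_subset ⟨C.2, hxC⟩ ⟨D.2, hxD⟩
  · rw [ncard_pair (Subtype.coe_ne_coe.mpr hCD)]
    exact hle x

theorem mem_edge_iff_of_forall_mem (h𝒞 : 𝒞.Finite) (hle : ∀ x, {C ∈ 𝒞 | x ∈ C}.ncard ≤ 2)
    {e : Sym2 𝒞} (he : e ∈ (meetGraph 𝒞).edgeSet) {x : X} (hx : ∀ E ∈ e, x ∈ (E : Set X))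
    (E : 𝒞) : E ∈ e ↔ x ∈ (E : Set X) := by
  induction e using Sym2.ind with
  | h C D =>
    have hpair := sep_mem_eq_pair h𝒞 hle ((meetGraph_adj.mp he).1)
      (hx C (Sym2.mem_mk_left C D)) (hx D (Sym2.mem_mk_right C D))
    have hxE : x ∈ (E : Set X) ↔ (E : Set X) ∈ {F ∈ 𝒞 | x ∈ F} := ⟨fun h => ⟨E.2, h⟩, And.right⟩
    rw [hxE, hpair, Sym2.mem_iff, mem_insert_iff, mem_singleton_iff, Subtype.ext_iff,
      Subtype.ext_iff]

theorem card_edgeSet_meetGraph_le (h𝒞 : 𝒞.Finite) (hle : ∀ x, {C ∈ 𝒞 | x ∈ C}.ncard ≤ 2)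
    (hS : {x | 2 ≤ {C ∈ 𝒞 | x ∈ C}.ncard}.Finite) :
    Nat.card (meetGraph 𝒞).edgeSet ≤ {x | 2 ≤ {C ∈ 𝒞 | x ∈ C}.ncard}.ncard := by
  have hpoint (e : (meetGraph 𝒞).edgeSet) :
      ∃ x : {x | 2 ≤ {C ∈ 𝒞 | x ∈ C}.ncard}, ∀ E ∈ (e : Sym2 𝒞), x.1 ∈ (E : Set X) := by
    obtain ⟨e, he⟩ := e
    induction e using Sym2.ind with
    | h C D =>
      obtain ⟨hCD, x, hxC, hxD⟩ := meetGraph_adj.mp he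
      have hx : 2 ≤ {C ∈ 𝒞 | x ∈ C}.ncard := by
        rw [sep_mem_eq_pair h𝒞 hle hCD hxC hxD, ncard_pair (Subtype.coe_ne_coe.mpr hCD)]
      refine ⟨⟨x, hx⟩, fun E hE => ?_⟩
      rcases Sym2.mem_iff.mp hE with rfl | rfl
      exacts [hxC, hxD]
  choose f hf using hpoint
  have := hS.to_subtype
  rw [← Nat.card_coe_set_eq]
  refine Nat.card_le_card_of_injective f fun e e' hee' => Subtype.ext (Sym2.ext fun E => ?_)
  rw [mem_edge_iff_of_forall_mem h𝒞 hle e.2 (hf e), hee',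
    ← mem_edge_iff_of_forall_mem h𝒞 hle e'.2 (hf e')]

theorem stmt3_general (X : Type) [TopologicalSpace X]
    (hconn : ConnectedSpace X)
    (hfin : (irreducibleComponents X).Finite)
    (S : Set X)
    (hS : S = {x : X | 2 ≤ {C ∈ irreducibleComponents X | x ∈ C}.ncard})
    (hSfin : S.Finite)
    (htwo : ∀ x ∈ S, {C ∈ irreducibleComponents X | x ∈ C}.ncard = 2) :
    (irreducibleComponents X).ncard ≤ S.ncard + 1 := by
  subst hS
  have hle (x : X) : {C ∈ irreducibleComponents X | x ∈ C}.ncard ≤ 2 := by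
    by_cases hx : 2 ≤ {C ∈ irreducibleComponents X | x ∈ C}.ncard
    exacts [(htwo x hx).le, by omega]
  have : Nonempty (irreducibleComponents X) :=
    ⟨⟨_, irreducibleComponent_mem_irreducibleComponents (Classical.arbitrary X)⟩⟩
  have hconnected : (meetGraph (irreducibleComponents X)).Connected :=
    ⟨meetGraph_preconnected hfin isClosed_of_mem_irreducibleComponents
      (fun _ hC => hC.1.nonempty) sUnion_irreducibleComponents⟩
  rw [← Nat.card_coe_set_eq]
  exact hconnected.card_vert_le_card_edgeSet_add_one.trans
    (Nat.add_le_add_right (card_edgeSet_meetGraph_le hfin hle hSfin) 1)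

/-- Let `X` be a nonempty connected topological space with finitely many
irreducible components.  Let `S` be the set of points lying on at least two irreducible
components.  If `S` is finite and every point of `S` lies on exactly two irreducible
components, then the number of irreducible components is at most `|S| + 1`. -/
theorem stmt3 (X : Type) [TopologicalSpace X] [Nonempty X]
    (hconn : ConnectedSpace X)
    (hfin : (irreducibleComponents X).Finite)
    (S : Set X)
    (hS : S = {x : X | 2 ≤ {C ∈ irreducibleComponents X | x ∈ C}.ncard})
    (hSfin : S.Finite)
    (htwo : ∀ x ∈ S, {C ∈ irreducibleComponents X | x ∈ C}.ncard = 2) :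
    (irreducibleComponents X).ncard ≤ S.ncard + 1 :=
  stmt3_general X hconn hfin S hS hSfin htwo
end

section
/- Let K be a field, n ≥ 1, and let A = L₁ × ⋯ × L_n be a commutative K-algebra which is a finite direct product of fields L_i, with primitive idempotents e₁, …, e_n (e_i the identity of the factor L_i). Let G be a finite group acting on A by K-algebra automorphisms such that the induced action of G on the set {e₁, …, e_n} is transitive. Assume that the subalgebra of G-invariants A^G equals K·1_A. Then for each i, the stabilizer G_i = {g ∈ G : g(e_i) = e_i} acts on the field e_iA ≅ L_i, the fixed field (L_i)^{G_i} equals the image of the field embedding K → L_i, λ ↦ λ·e_i, and consequently L_i is a finite Galois extension of K whose Galois group is the image of the natural homomorphism from G_i to the automorphism group of L_i over K. -/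
/-!
Take `x ∈ Lᵢ` fixed by the stabilizer `Gᵢ` of `eᵢ`. The translate `ρ(g)(x eᵢ)` only depends on
the coset `g Gᵢ`, so the sum of these translates over `G ⧸ Gᵢ` is a `G`-invariant element of `A`,
hence a scalar `c ∈ K`. A translate with `g ∉ Gᵢ` lives in another factor `e_j A`, so the
`i`-th coordinate of the sum is `x`, and `x = c`. Summing over cosets rather than over `G` avoids
dividing by `|Gᵢ|`, which may vanish in `K`.

Thus the image of `Gᵢ` in `Aut_K(Lᵢ)` is a finite group with fixed field `K`, and Artin's theorem
shows that `Lᵢ/K` is finite Galois with this group as its Galois group.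
-/

open IntermediateField

section Artin

variable {K L : Type*} [Field K] [Field L] [Algebra K L] (H : Subgroup (L ≃ₐ[K] L)) [Finite H]

theorem IntermediateField.finiteDimensional_of_fixedField_eq_bot (h : fixedField H = ⊥) :
    FiniteDimensional K L := by
  have hcard : Module.finrank (fixedField H) L = Nat.card H := by
    have := Fintype.ofFinite H
    rw [Nat.card_eq_fintype_card]
    exact FixedPoints.finrank_eq_card H L
  rw [h, finrank_bot'] at hcard
  exact Module.finite_of_finrank_pos (hcard ▸ Nat.card_pos)

theorem IsGalois.of_fixedField_subgroup_eq_bot (h : fixedField H = ⊥) : IsGalois K L := by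
  have := finiteDimensional_of_fixedField_eq_bot H h
  exact IsGalois.of_fixedField_eq_bot K L (eq_bot_iff.2 (h ▸ fixedField_antitone le_top))

theorem IntermediateField.eq_top_of_fixedField_eq_bot (h : fixedField H = ⊥) : H = ⊤ := by
  have := finiteDimensional_of_fixedField_eq_bot H h
  rw [← fixingSubgroup_fixedField H, h, fixingSubgroup_bot]

end Artin

section ProductOfAlgebras

variable {ι : Type*} [DecidableEq ι]

theorem Pi.mul_single_one {R : ι → Type*} [∀ i, MulZeroOneClass (R i)] (a : ∀ i, R i) (i : ι) :
    a * Pi.single i 1 = Pi.single i (a i) := by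
  simpa using (Pi.single_mul_right (f := a) (1 : R i)).symm

theorem Pi.map_single_of_map_single_one {R : ι → Type*} [∀ i, MulZeroOneClass (R i)]
    {F : Type*} [FunLike F (∀ i, R i) (∀ i, R i)] [MulHomClass F (∀ i, R i) (∀ i, R i)]
    (f : F) {i j : ι} (hf : f (Pi.single i 1) = Pi.single j 1) (x : R i) :
    f (Pi.single i x) = Pi.single j (f (Pi.single i x) j) :=
  calc f (Pi.single i x) = f (Pi.single i x * Pi.single i 1) := by
        rw [Pi.mul_single_one, Pi.single_eq_same]
    _ = _ := by rw [map_mul, hf, Pi.mul_single_one]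

variable {K : Type*} [CommSemiring K] {L : ι → Type*} [∀ i, Semiring (L i)]
  [∀ i, Algebra K (L i)]

namespace AlgHom

def restrictFactor (f : (∀ i, L i) →ₐ[K] (∀ i, L i)) (i : ι)
    (hf : f (Pi.single i 1) = Pi.single i 1) : L i →ₐ[K] L i where
  toFun x := f (Pi.single i x) i
  map_one' := by simp [hf]
  map_mul' x y := by simp [Pi.single_mul]
  map_zero' := by simp
  map_add' x y := by simp [Pi.single_add]
  commutes' c := by
    rw [Algebra.algebraMap_eq_smul_one, Pi.single_smul, map_smul, hf]
    simp

theorem map_single_eq_single_restrictFactor (f : (∀ i, L i) →ₐ[K] (∀ i, L i)) {i : ι}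
    (hf : f (Pi.single i 1) = Pi.single i 1) (x : L i) :
    f (Pi.single i x) = Pi.single i (f.restrictFactor i hf x) :=
  Pi.map_single_of_map_single_one f hf x

end AlgHom

namespace AlgEquiv

def restrictFactorHom (i : ι) :
    MulAction.stabilizer ((∀ i, L i) ≃ₐ[K] (∀ i, L i)) (Pi.single i 1 : ∀ i, L i) →*
      (L i ≃ₐ[K] L i) :=
  (algHomUnitsEquiv K (L i)).toMonoidHom.comp <| MonoidHom.toHomUnits
    { toFun f := (f.1 : (∀ i, L i) →ₐ[K] (∀ i, L i)).restrictFactor i f.2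
      map_one' := by ext; simp [AlgHom.restrictFactor]
      map_mul' f g := by
        ext x
        change (f.1 * g.1) (Pi.single i x) i = f.1 (Pi.single i (g.1 (Pi.single i x) i)) i
        rw [AlgEquiv.mul_apply, ← Pi.map_single_of_map_single_one g.1 g.2] }

theorem map_single_eq_single_restrictFactorHom {i : ι}
    (f : MulAction.stabilizer ((∀ i, L i) ≃ₐ[K] (∀ i, L i)) (Pi.single i 1 : ∀ i, L i))
    (x : L i) : f.1 (Pi.single i x) = Pi.single i (restrictFactorHom i f x) :=
  AlgHom.map_single_eq_single_restrictFactor (f.1 : (∀ i, L i) →ₐ[K] (∀ i, L i)) f.2 x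

end AlgEquiv

theorem mem_range_algebraMap_of_forall_stabilizer_fixed
    {G : Type*} [Group G] [Finite G] (ρ : G →* ((∀ i, L i) ≃ₐ[K] (∀ i, L i)))
    (hperm : ∀ (g : G) (i : ι), ∃ j, ρ g (Pi.single i 1) = Pi.single j 1)
    (hinv : ∀ a : ∀ i, L i, (∀ g : G, ρ g a = a) → ∃ c : K, a = algebraMap K (∀ i, L i) c)
    {i : ι} {H : Subgroup G} (hH : ∀ g : G, ρ g (Pi.single i 1) = Pi.single i 1 → g ∈ H)
    {x : L i} (hx : ∀ h ∈ H, ρ h (Pi.single i x) = Pi.single i x) :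
    x ∈ Set.range (algebraMap K (L i)) := by
  have := Fintype.ofFinite (G ⧸ H)
  let F : G ⧸ H → ∀ i, L i := fun q => ρ q.out (Pi.single i x)
  have hF (g : G) : F g = ρ g (Pi.single i x) := by
    obtain ⟨h, hgh⟩ := QuotientGroup.mk_out_eq_mul H g
    simp only [F, hgh, map_mul, AlgEquiv.mul_apply, hx h h.2]
  have hF_smul (g : G) (q : G ⧸ H) : ρ g (F q) = F (g • q) := by
    induction q using QuotientGroup.induction_on with | H g' => ?_
    rw [hF, MulAction.Quotient.smul_mk, smul_eq_mul, hF, map_mul, AlgEquiv.mul_apply]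
  have hF_one : F ((1 : G) : G ⧸ H) i = x := by
    rw [hF, map_one, AlgEquiv.one_apply, Pi.single_eq_same]
  have hF_ne (q : G ⧸ H) (hq : q ≠ ((1 : G) : G ⧸ H)) : F q i = 0 := by
    induction q using QuotientGroup.induction_on with | H g => ?_
    obtain ⟨j, hj⟩ := hperm g i
    have hij : i ≠ j := by
      rintro rfl
      exact hq (QuotientGroup.eq.2 (by simpa using hH g hj))
    rw [hF, Pi.map_single_of_map_single_one (ρ g) hj, Pi.single_eq_of_ne hij]
  obtain ⟨c, hc⟩ := hinv (∑ q, F q) fun g => by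
    simp only [map_sum, hF_smul]
    exact Equiv.sum_comp (MulAction.toPerm g) F
  refine ⟨c, ?_⟩
  have hci := congrFun hc i
  rw [Finset.sum_apply, Finset.sum_eq_single _ (fun q _ hq => hF_ne q hq) (by simp), hF_one]
    at hci
  exact hci.symm

end ProductOfAlgebras

theorem stmt4_general (K : Type) [Field K] (n : ℕ)
    (L : Fin n → Type) [∀ i, Field (L i)] [∀ i, Algebra K (L i)]
    (G : Type) [Group G] [Finite G]
    (ρ : G →* ((∀ i, L i) ≃ₐ[K] (∀ i, L i)))
    (hperm : ∀ (g : G) (i : Fin n), ∃ j, ρ g (Pi.single i 1) = Pi.single j 1)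
    (hinv : ∀ a : ∀ i, L i, (∀ g : G, ρ g a = a) →
      ∃ c : K, a = algebraMap K (∀ i, L i) c)
    (i : Fin n) (Gi : Subgroup G)
    (hGi : ∀ g : G, g ∈ Gi ↔ ρ g (Pi.single i 1) = Pi.single i 1) :
    ∃ σ : Gi →* (L i ≃ₐ[K] L i),
      (∀ (g : Gi) (x : L i), ρ (g : G) (Pi.single i x) = Pi.single i (σ g x)) ∧
      {x : L i | ∀ g : Gi, σ g x = x} = Set.range (algebraMap K (L i)) ∧
      FiniteDimensional K (L i) ∧ IsGalois K (L i) ∧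
      Function.Surjective σ := by
  let σ : Gi →* (L i ≃ₐ[K] L i) := (AlgEquiv.restrictFactorHom i).comp
    ((ρ.comp Gi.subtype).codRestrict _ fun g => (hGi g).1 g.2)
  have hσ (g : Gi) (x : L i) : ρ g (Pi.single i x) = Pi.single i (σ g x) :=
    AlgEquiv.map_single_eq_single_restrictFactorHom ⟨ρ g, (hGi g).1 g.2⟩ x
  have hfix : {x | ∀ g : Gi, σ g x = x} = Set.range (algebraMap K (L i)) := by
    refine Set.Subset.antisymm (fun x hx => ?_) ?_
    · refine mem_range_algebraMap_of_forall_stabilizer_fixed ρ hperm hinv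
        (fun g => (hGi g).2) fun h hh => ?_
      rw [hσ ⟨h, hh⟩, hx]
    · rintro _ ⟨c, rfl⟩ g
      exact (σ g).commutes c
  have : Finite σ.range := Finite.of_surjective _ σ.rangeRestrict_surjective
  have hbot : fixedField σ.range = ⊥ :=
    eq_bot_iff.2 fun x hx => mem_bot.2 (hfix ▸ fun g => hx ⟨σ g, g, rfl⟩)
  exact ⟨σ, hσ, hfix, finiteDimensional_of_fixedField_eq_bot _ hbot,
    IsGalois.of_fixedField_subgroup_eq_bot _ hbot,
    MonoidHom.range_eq_top.1 (eq_top_of_fixedField_eq_bot _ hbot)⟩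

/-- Let `K` be a field and `A = L₁ × ⋯ × Lₙ` (`n ≥ 1`) a finite product of
fields, a `K`-algebra, with primitive idempotents `eᵢ = Pi.single i 1`.  Let a finite group
`G` act on `A` by `K`-algebra automorphisms, permuting the primitive idempotents
transitively, and assume `A^G = K·1`.  Then for each `i`, the stabilizer `Gᵢ` of `eᵢ` acts
on the field `eᵢA ≅ Lᵢ` (there is an induced homomorphism `σ : Gᵢ →* Aut_K(Lᵢ)` with
`ρ g (single i x) = single i (σ g x)`), the fixed field of this action is the image of
`K → Lᵢ`, and `Lᵢ/K` is a finite Galois extension whose Galois group (the full automorphism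
group `Lᵢ ≃ₐ[K] Lᵢ`) is the image of `σ`, i.e. `σ` is surjective. -/
theorem stmt4 (K : Type) [Field K] (n : ℕ) (hn : 1 ≤ n)
    (L : Fin n → Type) [∀ i, Field (L i)] [∀ i, Algebra K (L i)]
    (G : Type) [Group G] [Finite G]
    (ρ : G →* ((∀ i, L i) ≃ₐ[K] (∀ i, L i)))
    (hperm : ∀ (g : G) (i : Fin n), ∃ j, ρ g (Pi.single i 1) = Pi.single j 1)
    (htrans : ∀ i j : Fin n, ∃ g : G, ρ g (Pi.single i 1) = Pi.single j 1)
    (hinv : ∀ a : ∀ i, L i, (∀ g : G, ρ g a = a) →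
      ∃ c : K, a = algebraMap K (∀ i, L i) c)
    (i : Fin n) (Gi : Subgroup G)
    (hGi : ∀ g : G, g ∈ Gi ↔ ρ g (Pi.single i 1) = Pi.single i 1) :
    ∃ σ : Gi →* (L i ≃ₐ[K] L i),
      (∀ (g : Gi) (x : L i), ρ (g : G) (Pi.single i x) = Pi.single i (σ g x)) ∧
      {x : L i | ∀ g : Gi, σ g x = x} = Set.range (algebraMap K (L i)) ∧
      FiniteDimensional K (L i) ∧ IsGalois K (L i) ∧
      Function.Surjective σ :=
  stmt4_general K n L G ρ hperm hinv i Gi hGi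
end

section
/- Let k be a field, A = k[X, Y]/(XY), and let 𝔪 be the maximal ideal of A generated by the images of X and Y (the origin of the union of the two coordinate axes). Let B be a commutative A-algebra that is finite and flat as an A-module, and let 𝔮 be a prime ideal of B lying over 𝔪. Then the localization B_𝔮 is not an integral domain; in particular, B_𝔮 is not a regular local ring. -/
/-- The coordinate ring `k[X, Y]/(XY)` of the union of the two coordinate axes. -/
noncomputable abbrev NodeRing (k : Type) [Field k] : Type :=
  MvPolynomial (Fin 2) k ⧸
    Ideal.span {(MvPolynomial.X 0 : MvPolynomial (Fin 2) k) * MvPolynomial.X 1}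

/-- The maximal ideal of `k[X, Y]/(XY)` generated by the images of `X` and `Y`
(the origin, i.e. the node). -/
noncomputable abbrev nodeMaxIdeal (k : Type) [Field k] : Ideal (NodeRing k) :=
  Ideal.span
    {Ideal.Quotient.mk _ (MvPolynomial.X 0 : MvPolynomial (Fin 2) k),
     Ideal.Quotient.mk _ (MvPolynomial.X 1 : MvPolynomial (Fin 2) k)}

/-- A commutative ring is a regular local ring if it is a Noetherian local ring whose
embedding dimension (the dimension of the cotangent space `𝔪/𝔪²` over the residue field)
equals its Krull dimension. -/
def IsRegularLocalRing' (R : Type) [CommRing R] : Prop :=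
  ∃ (_ : IsLocalRing R) (_ : IsNoetherianRing R),
    (Module.finrank (IsLocalRing.ResidueField R) (IsLocalRing.CotangentSpace R) :
      WithBot (WithTop ℕ)) = ringKrullDim R

/-!
In `A = k[X, Y]/(XY)` the annihilator of `x` is `(y)` and vice versa, both inside `𝔪`, so `x` and
`y` stay nonzero in `A_𝔪` while `xy = 0`. Since `B` is flat, the local homomorphism `A_𝔪 → B_𝔮`
is flat, hence faithfully flat, hence injective, so `B_𝔮` is not a domain either.

For regularity: `dim A ≤ 1` because `XY` is a nonzerodivisor of the two-dimensional ring
`k[X, Y]`, and `B` is integral over `A`, so `dim B_𝔮 ≤ 1`. A regular local ring of dimension at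
most one is a field, or has a principal maximal ideal `(t)` and a non-maximal prime `P`; then
`t ∉ P` gives `P = tP`, so `P = 0` by Nakayama and the ring is a domain.
-/

open IsLocalRing

lemma isDomain_localization_under_of_flat {R S : Type*} [CommRing R] [CommRing S] [Algebra R S]
    [Module.Flat R S] (P : Ideal S) [P.IsPrime] [IsDomain (Localization.AtPrime P)] :
    IsDomain (Localization.AtPrime (P.under R)) := by
  let := Localization.AtPrime.algebraOfLiesOver (P.under R) P
  have : IsLocalHom (algebraMap (Localization.AtPrime (P.under R)) (Localization.AtPrime P)) := by
    rw [RingHom.algebraMap_toAlgebra]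
    exact Localization.isLocalHom_localRingHom (P.under R) P (algebraMap R S) Ideal.LiesOver.over
  have : Module.FaithfullyFlat (Localization.AtPrime (P.under R)) (Localization.AtPrime P) :=
    Module.FaithfullyFlat.of_flat_of_isLocalHom
  exact (FaithfulSMul.algebraMap_injective _ (Localization.AtPrime P)).isDomain _

lemma not_isDomain_localization_of_mul_eq_zero {R : Type*} [CommRing R] (p : Ideal R) [p.IsPrime]
    {x y : R} (hxy : x * y = 0) (hx : ∀ a, x * a = 0 → a ∈ p) (hy : ∀ a, y * a = 0 → a ∈ p) :
    ¬ IsDomain (Localization.AtPrime p) := by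
  intro
  have hne : ∀ z : R, (∀ a, z * a = 0 → a ∈ p) → algebraMap R (Localization.AtPrime p) z ≠ 0 := by
    intro z hz hz0
    obtain ⟨⟨s, hs⟩, hsz⟩ := (IsLocalization.map_eq_zero_iff p.primeCompl _ z).mp hz0
    exact hs (hz s (by rw [mul_comm]; exact hsz))
  exact mul_ne_zero (hne x hx) (hne y hy) (by rw [← map_mul, hxy, map_zero])

lemma Ideal.Quotient.mk_mem_span_of_mk_mul_eq_zero {R : Type*} [CommRing R] [IsDomain R]
    {a b c q : R} (habc : a * b = c) (ha : a ≠ 0)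
    (h : Ideal.Quotient.mk (Ideal.span {c}) a * Ideal.Quotient.mk _ q = 0) :
    Ideal.Quotient.mk (Ideal.span {c}) q ∈ Ideal.span {Ideal.Quotient.mk _ b} := by
  rw [← map_mul, Ideal.Quotient.eq_zero_iff_mem, Ideal.mem_span_singleton, ← habc,
    mul_dvd_mul_iff_left ha] at h
  exact Ideal.mem_span_singleton.mpr (map_dvd _ h)

lemma ringKrullDim_le_of_isIntegral {R S : Type*} [CommRing R] [CommRing S] [Algebra R S]
    [Algebra.IsIntegral R S] : ringKrullDim S ≤ ringKrullDim R :=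
  Order.krullDim_le_of_strictMono (PrimeSpectrum.comap (algebraMap R S)) fun _ _ h ↦
    Ideal.IsIntegral.comap_lt_comap (R := R) h

lemma ringKrullDim_localization_atPrime_le {R : Type*} [CommRing R] (p : Ideal R) [p.IsPrime] :
    ringKrullDim (Localization.AtPrime p) ≤ ringKrullDim R := by
  rw [IsLocalization.AtPrime.ringKrullDim_eq_height p]
  exact Ideal.height_le_ringKrullDim_of_isPrime

lemma IsLocalRing.isDomain_of_isPrincipal_maximalIdeal {R : Type*} [CommRing R]
    [IsNoetherianRing R] [IsLocalRing R] (h : (maximalIdeal R).IsPrincipal)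
    (hdim : 0 < ringKrullDim R) : IsDomain R := by
  obtain ⟨P, hP, hPm⟩ : ∃ P : Ideal R, P.IsPrime ∧ P ≠ maximalIdeal R := by
    by_contra! H
    have : Ring.KrullDimLE 0 R := .mk₀ fun I hI ↦ H I hI ▸ maximalIdeal.isMaximal R
    exact hdim.not_ge (Ring.krullDimLE_iff.mp this)
  obtain ⟨t, ht⟩ := h
  have htP : t ∉ P := fun htP ↦ hPm <| le_antisymm (le_maximalIdeal hP.ne_top) <| by
    rw [ht, Ideal.submodule_span_eq, Ideal.span_le, Set.singleton_subset_iff]; exact htP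
  have hPle : P ≤ maximalIdeal R • P := by
    intro a ha
    obtain ⟨b, rfl⟩ := Ideal.mem_span_singleton'.mp (ht ▸ le_maximalIdeal hP.ne_top ha)
    have hb : b ∈ P := (hP.mem_or_mem ha).resolve_right htP
    rw [mul_comm]
    exact Submodule.smul_mem_smul (ht ▸ Submodule.mem_span_singleton_self t) hb
  have hbot : P = ⊥ := Submodule.eq_bot_of_le_smul_of_le_jacobson_bot _ _
    (IsNoetherian.noetherian P) hPle (maximalIdeal_le_jacobson ⊥)
  have : (⊥ : Ideal R).IsPrime := hbot ▸ hP
  exact IsDomain.of_bot_isPrime R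

lemma IsRegularLocalRing.isDomain_of_ringKrullDim_le_one {R : Type*} [CommRing R]
    [IsRegularLocalRing R] (h : ringKrullDim R ≤ 1) : IsDomain R := by
  have hrank := (IsRegularLocalRing.iff_finrank_cotangentSpace R).mp inferInstance
  rcases Nat.eq_zero_or_pos (Module.finrank (ResidueField R) (CotangentSpace R)) with h0 | hpos
  · exact (finrank_cotangentSpace_eq_zero_iff.mp h0).isDomain
  · refine isDomain_of_isPrincipal_maximalIdeal ?_ ?_
    · exact finrank_cotangentSpace_le_one_iff.mp (by exact_mod_cast hrank.trans_le h)
    · exact hrank ▸ (by exact_mod_cast hpos)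

namespace NodeRing

open MvPolynomial

variable (k : Type) [Field k]

lemma ringKrullDim_le_one : ringKrullDim (NodeRing k) ≤ 1 := by
  have hXY : (X 0 * X 1 : MvPolynomial (Fin 2) k) ∈ nonZeroDivisors _ :=
    mem_nonZeroDivisors_of_ne_zero (mul_ne_zero (X_ne_zero _) (X_ne_zero _))
  have h : ringKrullDim (NodeRing k) + 1 ≤ 1 + 1 := by
    simpa [MvPolynomial.ringKrullDim_of_isNoetherianRing, ringKrullDim_eq_zero_of_field,
      one_add_one_eq_two] using ringKrullDim_quotient_succ_le_of_nonZeroDivisor hXY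
  exact ENat.WithBot.add_le_add_one_right_iff.mp h

lemma not_isDomain_localization (p : Ideal (NodeRing k)) [p.IsPrime] (hp : nodeMaxIdeal k ≤ p) :
    ¬ IsDomain (Localization.AtPrime p) := by
  have hX : ∀ i, (Ideal.Quotient.mk _ (X i) : NodeRing k) ∈ p := fun i ↦
    hp (Ideal.subset_span (by fin_cases i <;> simp))
  refine not_isDomain_localization_of_mul_eq_zero p (x := Ideal.Quotient.mk _ (X 0))
    (y := Ideal.Quotient.mk _ (X 1)) ?_ ?_ ?_
  · rw [← map_mul, Ideal.Quotient.eq_zero_iff_mem]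
    exact Ideal.mem_span_singleton_self _
  · intro a ha
    obtain ⟨q, rfl⟩ := Ideal.Quotient.mk_surjective a
    exact (Ideal.span_singleton_le_iff_mem _).mpr (hX 1)
      (Ideal.Quotient.mk_mem_span_of_mk_mul_eq_zero rfl (X_ne_zero _) ha)
  · intro a ha
    obtain ⟨q, rfl⟩ := Ideal.Quotient.mk_surjective a
    exact (Ideal.span_singleton_le_iff_mem _).mpr (hX 0)
      (Ideal.Quotient.mk_mem_span_of_mk_mul_eq_zero (mul_comm _ _) (X_ne_zero _) ha)

end NodeRing

/-- Let `k` be a field, `A = k[X, Y]/(XY)`, `𝔪 = (X, Y)` the maximal ideal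
at the node.  Let `B` be a commutative `A`-algebra, finite and flat as an `A`-module, and
`𝔮` a prime ideal of `B` lying over `𝔪`.  Then the localization `B_𝔮` is not an integral
domain; in particular it is not a regular local ring. -/
theorem stmt5 (k : Type) [Field k]
    (B : Type) [CommRing B] [Algebra (NodeRing k) B]
    (hfin : Module.Finite (NodeRing k) B)
    (hflat : Module.Flat (NodeRing k) B)
    (𝔮 : Ideal B) [𝔮.IsPrime]
    (hover : Ideal.comap (algebraMap (NodeRing k) B) 𝔮 = nodeMaxIdeal k) :
    ¬ IsDomain (Localization.AtPrime 𝔮) ∧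
      ¬ IsRegularLocalRing' (Localization.AtPrime 𝔮) := by
  have hdomain : ¬ IsDomain (Localization.AtPrime 𝔮) := fun _ ↦
    NodeRing.not_isDomain_localization k (𝔮.under _) hover.ge
      (isDomain_localization_under_of_flat 𝔮)
  refine ⟨hdomain, fun ⟨_, _, hrank⟩ ↦ hdomain ?_⟩
  have : IsRegularLocalRing (Localization.AtPrime 𝔮) :=
    (IsRegularLocalRing.iff_finrank_cotangentSpace _).mpr hrank
  refine IsRegularLocalRing.isDomain_of_ringKrullDim_le_one ?_
  calc ringKrullDim (Localization.AtPrime 𝔮) ≤ ringKrullDim B :=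
        ringKrullDim_localization_atPrime_le 𝔮
    _ ≤ ringKrullDim (NodeRing k) := ringKrullDim_le_of_isIntegral
    _ ≤ 1 := NodeRing.ringKrullDim_le_one k
end
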